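/- arXiv:2401.06987 — 6 statements merged into one kernel-verified Lean document; each statement's English description precedes it below -/
import Mathlib

section
/- Let U be a real n×q matrix, let B be an invertible q×q real matrix, let η ∈ ℝ^q, and let β : ℝ^q → ℝⁿ be differentiable at η with Uᵀ·β(y) = y for all y near η. Define β'(y') = β((Bᵀ)⁻¹·y'), which satisfies (U·B)ᵀ·β'(y') = y' for y' near Bᵀη. Let J be the Jacobian of β at η and J' the Jacobian of β' at Bᵀη. Then J'·(U·B)ᵀ = J·Uᵀ; i.e., the matrix of absolute sensitivities A = J·Uᵀ is independent of the choice of basis matrix U for the space of conserved quantities. -/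
/-!
Since `β' = β ∘ (Bᵀ)⁻¹`, the chain rule gives `J' = J (Bᵀ)⁻¹`, so
`J' (U B)ᵀ = J (Bᵀ)⁻¹ Bᵀ Uᵀ = J Uᵀ`.
-/

open Matrix

namespace Matrix

variable {𝕜 : Type*} [NontriviallyNormedField 𝕜] [CompleteSpace 𝕜]
  {l m n : Type*} [Fintype m] [Fintype n]

theorem toContinuousLinearMap_mulVecLin_mul (J : Matrix l m 𝕜) (M : Matrix m n 𝕜) :
    LinearMap.toContinuousLinearMap (J * M).mulVecLin =
      (LinearMap.toContinuousLinearMap J.mulVecLin).comp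
        (LinearMap.toContinuousLinearMap M.mulVecLin) := by
  ext
  simp

theorem toContinuousLinearMap_mulVecLin_injective [DecidableEq m] :
    Function.Injective fun J : Matrix l m 𝕜 => LinearMap.toContinuousLinearMap J.mulVecLin := by
  intro J J' h
  apply toLin'.injective
  simpa only [toLin'_apply'] using LinearMap.toContinuousLinearMap.injective h

theorem hasFDerivAt_comp_mulVec [Fintype l] {f : (m → 𝕜) → (l → 𝕜)} {J : Matrix l m 𝕜}
    (M : Matrix m n 𝕜) {x : n → 𝕜}
    (hf : HasFDerivAt f (LinearMap.toContinuousLinearMap J.mulVecLin) (M *ᵥ x)) :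
    HasFDerivAt (fun y => f (M *ᵥ y)) (LinearMap.toContinuousLinearMap (J * M).mulVecLin) x := by
  rw [toContinuousLinearMap_mulVecLin_mul]
  exact hf.comp x (LinearMap.toContinuousLinearMap M.mulVecLin).hasFDerivAt

end Matrix

theorem stmt5_general {n q : ℕ}
    (U : Matrix (Fin n) (Fin q) ℝ)
    (B : Matrix (Fin q) (Fin q) ℝ) (hB : IsUnit B.det)
    (η : Fin q → ℝ) (β β' : (Fin q → ℝ) → (Fin n → ℝ))
    (hβ' : ∀ y', β' y' = β ((Bᵀ)⁻¹.mulVec y'))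
    (J J' : Matrix (Fin n) (Fin q) ℝ)
    (hJ : HasFDerivAt β (LinearMap.toContinuousLinearMap (Matrix.mulVecLin J)) η)
    (hJ' : HasFDerivAt β' (LinearMap.toContinuousLinearMap (Matrix.mulVecLin J'))
      (Bᵀ.mulVec η)) :
    J' * (U * B)ᵀ = J * Uᵀ := by
  have hinv : (Bᵀ)⁻¹ * Bᵀ = 1 := nonsing_inv_mul _ (by rwa [det_transpose])
  have hβ'_eq : β' = fun y' => β ((Bᵀ)⁻¹ *ᵥ y') := funext hβ'
  have hchain : HasFDerivAt β' (LinearMap.toContinuousLinearMap (J * (Bᵀ)⁻¹).mulVecLin)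
      (Bᵀ *ᵥ η) := by
    rw [hβ'_eq]
    apply hasFDerivAt_comp_mulVec
    rwa [mulVec_mulVec, hinv, one_mulVec]
  have hJ'_eq : J' = J * (Bᵀ)⁻¹ := toContinuousLinearMap_mulVecLin_injective (hJ'.unique hchain)
  rw [hJ'_eq, transpose_mul, Matrix.mul_assoc, ← Matrix.mul_assoc (Bᵀ)⁻¹, hinv, Matrix.one_mul]

theorem stmt5 {n q : ℕ} (hn : 0 < n) (hq : 0 < q)
    (U : Matrix (Fin n) (Fin q) ℝ)
    (B : Matrix (Fin q) (Fin q) ℝ) (hB : IsUnit B.det)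
    (η : Fin q → ℝ) (β β' : (Fin q → ℝ) → (Fin n → ℝ))
    (hβ' : ∀ y', β' y' = β ((Bᵀ)⁻¹.mulVec y'))
    (J J' : Matrix (Fin n) (Fin q) ℝ)
    (hJ : HasFDerivAt β (LinearMap.toContinuousLinearMap (Matrix.mulVecLin J)) η)
    (hJ' : HasFDerivAt β' (LinearMap.toContinuousLinearMap (Matrix.mulVecLin J'))
      (Bᵀ.mulVec η))
    (hsec : ∀ᶠ y in nhds η, Uᵀ.mulVec (β y) = y) :
    J' * (U * B)ᵀ = J * Uᵀ :=
  stmt5_general U B hB η β β' hβ' J J' hJ hJ'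
end

section
/- (Generalized Cramer–Rao bound) Let x ∈ ℝⁿ have all entries strictly positive, let U be a real n×q matrix of full column rank, and set g = (Uᵀ·diag(x)·U)⁻¹. Let V and V̄ be real n×n matrices with V̄ᵀ·U = 0. Define Cov(V) = (V − V̄)ᵀ·diag(1/x)·(V − V̄). Then the n×n matrix Cov(V) − Vᵀ·U·g·Uᵀ·V is positive semidefinite. -/
/-!
Write `D = diag x` and `W = V - V̄`; since `V̄ᵀ U = 0`, the subtracted term is unchanged when `V`
is replaced by `W`. The Gram matrix of the columns of `[U | D⁻¹ W]` for the inner product given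
by `D` is positive semidefinite, and its Schur complement with respect to the invertible block
`Uᵀ D U` is `Wᵀ D⁻¹ W - Wᵀ U (Uᵀ D U)⁻¹ Uᵀ W`.
-/

open Matrix

namespace Matrix

theorem conjTranspose_fromCols_mul_mul_fromCols {R m n₁ n₂ : Type*} [Semiring R] [Star R]
    [Fintype m] (A : Matrix m m R) (B₁ : Matrix m n₁ R) (B₂ : Matrix m n₂ R) :
    (fromCols B₁ B₂)ᴴ * A * fromCols B₁ B₂ =
      fromBlocks (B₁ᴴ * A * B₁) (B₁ᴴ * A * B₂) (B₂ᴴ * A * B₁) (B₂ᴴ * A * B₂) := by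
  rw [conjTranspose_fromCols_eq_fromRows_conjTranspose, fromRows_mul, fromRows_mul_fromCols]

theorem PosDef.cramerRao {K ι κ μ : Type*} [Field K] [PartialOrder K] [StarRing K]
    [StarOrderedRing K] [Fintype ι] [DecidableEq ι] [Fintype κ] [DecidableEq κ] [Fintype μ]
    {D : Matrix ι ι K} (hD : D.PosDef) {U : Matrix ι κ K} (hU : Function.Injective U.mulVec)
    (W : Matrix ι μ K) :
    (Wᴴ * D⁻¹ * W - Wᴴ * U * (Uᴴ * D * U)⁻¹ * Uᴴ * W).PosSemidef := by
  have hG := hD.conjTranspose_mul_mul_same hU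
  let := hG.isUnit.invertible
  let := hD.isUnit.invertible
  have hDinvH : (D⁻¹)ᴴ = D⁻¹ := hD.inv.isHermitian
  have hblocks : (fromCols U (D⁻¹ * W))ᴴ * D * fromCols U (D⁻¹ * W) =
      fromBlocks (Uᴴ * D * U) (Uᴴ * W) (Uᴴ * W)ᴴ (Wᴴ * D⁻¹ * W) := by
    rw [conjTranspose_fromCols_mul_mul_fromCols]
    congr 1 <;> simp only [conjTranspose_mul, conjTranspose_conjTranspose, hDinvH,
      Matrix.mul_assoc, mul_inv_cancel_left_of_invertible, inv_mul_cancel_left_of_invertible]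
  have hgram := hD.posSemidef.conjTranspose_mul_mul_same (fromCols U (D⁻¹ * W))
  rw [hblocks, fromBlocks₁₁ _ _ hG] at hgram
  simpa only [conjTranspose_mul, conjTranspose_conjTranspose, Matrix.mul_assoc] using hgram

end Matrix

theorem stmt6_general {n q : ℕ}
    (x : Fin n → ℝ) (hx : ∀ i, 0 < x i)
    (U : Matrix (Fin n) (Fin q) ℝ)
    (hU : LinearIndependent ℝ (fun j : Fin q => fun i : Fin n => U i j))
    (V Vbar : Matrix (Fin n) (Fin n) ℝ) (hVbar : Vbarᵀ * U = 0) :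
    let g := (Uᵀ * Matrix.diagonal x * U)⁻¹
    let Cov := (V - Vbar)ᵀ * Matrix.diagonal (fun i => (x i)⁻¹) * (V - Vbar)
    (Cov - Vᵀ * U * g * Uᵀ * V).PosSemidef := by
  intro g Cov
  have hD : (diagonal x).PosDef := posDef_diagonal_iff.mpr hx
  have hDinv : (diagonal x)⁻¹ = diagonal (fun i => (x i)⁻¹) := by
    refine inv_eq_left_inv ?_
    rw [diagonal_mul_diagonal, ← diagonal_one]
    exact congrArg diagonal (funext fun i => inv_mul_cancel₀ (hx i).ne')
  have hUVbar : Uᵀ * Vbar = 0 := by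
    rw [← transpose_eq_zero, transpose_mul, transpose_transpose, hVbar]
  have hproj : Vᵀ * U * g * Uᵀ * V = (V - Vbar)ᵀ * U * g * Uᵀ * (V - Vbar) := by
    rw [transpose_sub, Matrix.sub_mul, hVbar, sub_zero, Matrix.mul_sub,
      Matrix.mul_assoc _ Uᵀ Vbar, hUVbar, Matrix.mul_zero, sub_zero]
  have hCR := hD.cramerRao (mulVec_injective_iff.mpr hU) (V - Vbar)
  rw [conjTranspose_eq_transpose_of_trivial, conjTranspose_eq_transpose_of_trivial, hDinv] at hCR
  rw [hproj]
  exact hCR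

theorem stmt6 {n q : ℕ} (hn : 0 < n) (hq : 0 < q)
    (x : Fin n → ℝ) (hx : ∀ i, 0 < x i)
    (U : Matrix (Fin n) (Fin q) ℝ)
    (hU : LinearIndependent ℝ (fun j : Fin q => fun i : Fin n => U i j))
    (V Vbar : Matrix (Fin n) (Fin n) ℝ) (hVbar : Vbarᵀ * U = 0) :
    let g := (Uᵀ * Matrix.diagonal x * U)⁻¹
    let Cov := (V - Vbar)ᵀ * Matrix.diagonal (fun i => (x i)⁻¹) * (V - Vbar)
    (Cov - Vᵀ * U * g * Uᵀ * V).PosSemidef :=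
  stmt6_general x hx U hU V Vbar hVbar
end

section
/- Let x ∈ ℝⁿ have all entries strictly positive, let U be a real n×q matrix of full column rank, and let A = diag(x)·U·(Uᵀ·diag(x)·U)⁻¹·Uᵀ. Let V̄ be any real n×n matrix with V̄ᵀ·U = 0. Then the n×n matrix (Iₙ − V̄)ᵀ·diag(1/x)·(Iₙ − V̄) − diag(1/x)·A is positive semidefinite. -/
/-!
With `E = diag(1/x)` and `W = 1 - V̄`, the matrix `E A = U (Uᵀ diag(x) U)⁻¹ Uᵀ` is symmetric,
`A` is idempotent and `E A W = E A` because `Uᵀ V̄ = 0`. These three facts make the cross terms of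
`(W - A)ᵀ E (W - A)` collapse, so the matrix in question equals `(W - A)ᵀ E (W - A)`, a congruence
of the positive semidefinite diagonal matrix `E`.
-/

open Matrix

namespace Matrix

variable {m k R : Type*} [Fintype m] [Fintype k] [DecidableEq k] [CommRing R]

theorem nonsing_inv_mul_mul_nonsing_inv (M : Matrix k k R) : M⁻¹ * M * M⁻¹ = M⁻¹ := by
  by_cases h : IsUnit M.det
  · rw [nonsing_inv_mul M h, Matrix.one_mul]
  · simp [nonsing_inv_apply_not_isUnit M h]

theorem isIdempotentElem_mul_mul_nonsing_inv_mul_transpose (D : Matrix m m R) (U : Matrix m k R) :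
    IsIdempotentElem (D * U * (Uᵀ * D * U)⁻¹ * Uᵀ) := by
  set M := Uᵀ * D * U
  calc D * U * M⁻¹ * Uᵀ * (D * U * M⁻¹ * Uᵀ) = D * U * (M⁻¹ * M * M⁻¹) * Uᵀ := by
        simp only [M, Matrix.mul_assoc]
    _ = D * U * M⁻¹ * Uᵀ := by rw [nonsing_inv_mul_mul_nonsing_inv]

theorem IsSymm.mul_nonsing_inv_mul_transpose {D : Matrix m m R} (hD : D.IsSymm)
    (U : Matrix m k R) : (U * (Uᵀ * D * U)⁻¹ * Uᵀ).IsSymm := by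
  have hM : (Uᵀ * D * U).IsSymm := by
    rw [IsSymm, transpose_mul, transpose_mul, hD.eq, transpose_transpose, Matrix.mul_assoc]
  rw [IsSymm, transpose_mul, transpose_mul, transpose_nonsing_inv, hM.eq, transpose_transpose]
  exact (Matrix.mul_assoc _ _ _).symm

variable {n : Type*} [Fintype n]

theorem transpose_mul_mul_sub_eq {E A W : Matrix n n R} (hE : E.IsSymm) (hEA : (E * A).IsSymm)
    (hA : IsIdempotentElem A) (hW : E * A * W = E * A) :
    Wᵀ * E * W - E * A = (W - A)ᵀ * E * (W - A) := by
  have hAE : Aᵀ * E = E * A := by rw [← hE.eq, ← transpose_mul, hEA.eq, hE.eq]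
  have hWEA : Wᵀ * (E * A) = E * A := by
    rw [← hEA.eq, ← transpose_mul, hW]
  have hAEW : Aᵀ * E * W = E * A := by rw [hAE, hW]
  have hAEA : Aᵀ * E * A = E * A := by rw [hAE, Matrix.mul_assoc, hA.eq]
  have expand : (W - A)ᵀ * E * (W - A)
      = Wᵀ * E * W - Wᵀ * (E * A) - Aᵀ * E * W + Aᵀ * E * A := by
    simp only [transpose_sub, Matrix.sub_mul, Matrix.mul_sub, Matrix.mul_assoc]
    abel
  rw [expand, hWEA, hAEW, hAEA]
  abel

theorem PosSemidef.transpose_mul_mul_sub {E A W : Matrix n n ℝ} (hE : E.PosSemidef)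
    (hEA : (E * A).IsSymm) (hA : IsIdempotentElem A) (hW : E * A * W = E * A) :
    (Wᵀ * E * W - E * A).PosSemidef := by
  rw [transpose_mul_mul_sub_eq (isHermitian_iff_isSymm.1 hE.1) hEA hA hW]
  simpa using hE.conjTranspose_mul_mul_same (W - A)

end Matrix

theorem stmt7_general {n q : ℕ}
    (x : Fin n → ℝ) (hx : ∀ i, 0 < x i)
    (U : Matrix (Fin n) (Fin q) ℝ)
    (Vbar : Matrix (Fin n) (Fin n) ℝ) (hVbar : Vbarᵀ * U = 0) :
    let A := Matrix.diagonal x * U * (Uᵀ * Matrix.diagonal x * U)⁻¹ * Uᵀ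
    ((1 - Vbar)ᵀ * Matrix.diagonal (fun i => (x i)⁻¹) * (1 - Vbar)
      - Matrix.diagonal (fun i => (x i)⁻¹) * A).PosSemidef := by
  intro A
  set E := diagonal fun i => (x i)⁻¹
  set P := U * (Uᵀ * diagonal x * U)⁻¹ * Uᵀ
  have hED : E * diagonal x = 1 := by
    rw [diagonal_mul_diagonal, ← diagonal_one]
    exact congrArg diagonal (funext fun i => inv_mul_cancel₀ (hx i).ne')
  have hEA : E * A = P := by
    simp only [A, P, ← Matrix.mul_assoc, hED, Matrix.one_mul]
  have hUV : Uᵀ * Vbar = 0 := by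
    rw [← transpose_transpose Vbar, ← transpose_mul, hVbar, transpose_zero]
  refine PosSemidef.transpose_mul_mul_sub (PosSemidef.diagonal fun i => (inv_pos.2 (hx i)).le)
    ?_ (isIdempotentElem_mul_mul_nonsing_inv_mul_transpose _ U) ?_
  · rw [hEA]
    exact (isSymm_diagonal x).mul_nonsing_inv_mul_transpose U
  · rw [hEA, Matrix.mul_sub, Matrix.mul_one, Matrix.mul_assoc, hUV, Matrix.mul_zero, sub_zero]

theorem stmt7 {n q : ℕ} (hn : 0 < n) (hq : 0 < q)
    (x : Fin n → ℝ) (hx : ∀ i, 0 < x i)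
    (U : Matrix (Fin n) (Fin q) ℝ)
    (hU : LinearIndependent ℝ (fun j : Fin q => fun i : Fin n => U i j))
    (Vbar : Matrix (Fin n) (Fin n) ℝ) (hVbar : Vbarᵀ * U = 0) :
    let A := Matrix.diagonal x * U * (Uᵀ * Matrix.diagonal x * U)⁻¹ * Uᵀ
    ((1 - Vbar)ᵀ * Matrix.diagonal (fun i => (x i)⁻¹) * (1 - Vbar)
      - Matrix.diagonal (fun i => (x i)⁻¹) * A).PosSemidef :=
  stmt7_general x hx U Vbar hVbar
end

section
/- Let x ∈ ℝⁿ have all entries strictly positive, let U be a real n×q matrix of full column rank, and let A = diag(x)·U·(Uᵀ·diag(x)·U)⁻¹·Uᵀ. Then every diagonal entry of A lies in the unit interval: 0 ≤ A_{ii} ≤ 1 for all i. -/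
/-!
Writing `A = D P` with `D = diag(x)` and `P = U (Uᵀ D U)⁻¹ Uᵀ`, the matrix `P` is symmetric and
satisfies `P D P = P`. Comparing the `(i, i)` entries gives `Pᵢᵢ = ∑ₖ xₖ Pᵢₖ²`, so
`Aᵢᵢ = xᵢ Pᵢᵢ = ∑ₖ xᵢ xₖ Pᵢₖ²` is nonnegative and dominates its own square (the `k = i` term).
-/

open Matrix

namespace Matrix

variable {ι κ R : Type*} [Fintype ι]

theorem mul_diag_mem_Icc_of_mul_diagonal_mul_self [DecidableEq ι] [CommRing R] [LinearOrder R]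
    [IsStrictOrderedRing R] {P : Matrix ι ι R} {x : ι → R} (hx : ∀ i, 0 ≤ x i)
    (hP : Pᵀ = P) (hPDP : P * diagonal x * P = P) (i : ι) :
    x i * P i i ∈ Set.Icc (0 : R) 1 := by
  have hterm_nonneg : ∀ k, 0 ≤ x i * x k * P i k ^ 2 := fun k =>
    mul_nonneg (mul_nonneg (hx i) (hx k)) (sq_nonneg _)
  have hdiag : x i * P i i = ∑ k, x i * x k * P i k ^ 2 := by
    conv_lhs => rw [← hPDP]
    have hsymm : ∀ k, P k i = P i k := fun k => by rw [← transpose_apply P i k, hP]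
    simp only [mul_apply, diagonal_apply, mul_ite, mul_zero, Finset.sum_ite_eq',
      Finset.mem_univ, if_true, Finset.mul_sum, hsymm]
    exact Finset.sum_congr rfl fun k _ => by ring
  have hnonneg : 0 ≤ x i * P i i := hdiag ▸ Finset.sum_nonneg fun k _ => hterm_nonneg k
  have hsq_le : (x i * P i i) ^ 2 ≤ x i * P i i := by
    calc (x i * P i i) ^ 2 = x i * x i * P i i ^ 2 := by ring
      _ ≤ ∑ k, x i * x k * P i k ^ 2 :=
        Finset.single_le_sum (f := fun k => x i * x k * P i k ^ 2)
          (fun k _ => hterm_nonneg k) (Finset.mem_univ i)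
      _ = x i * P i i := hdiag.symm
  exact ⟨hnonneg, by nlinarith⟩

theorem posDef_transpose_mul_diagonal_mul [DecidableEq ι] [Fintype κ] {U : Matrix ι κ ℝ}
    {x : ι → ℝ} (hx : ∀ i, 0 < x i) (hU : Function.Injective U.mulVec) :
    (Uᵀ * diagonal x * U).PosDef := by
  simpa only [conjTranspose_eq_transpose_of_trivial] using
    (PosDef.diagonal hx).conjTranspose_mul_mul_same hU

variable [Fintype κ] [DecidableEq κ] [CommRing R] {D : Matrix ι ι R}

theorem transpose_mul_inv_mul_transpose (U : Matrix ι κ R) (hD : Dᵀ = D) :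
    (U * (Uᵀ * D * U)⁻¹ * Uᵀ)ᵀ = U * (Uᵀ * D * U)⁻¹ * Uᵀ := by
  have hM : (Uᵀ * D * U)ᵀ = Uᵀ * D * U := by
    simp only [transpose_mul, transpose_transpose, hD, Matrix.mul_assoc]
  rw [transpose_mul, transpose_mul, transpose_transpose, transpose_nonsing_inv, hM,
    ← Matrix.mul_assoc]

theorem mul_inv_mul_transpose_mul_self {U : Matrix ι κ R} (hM : IsUnit (Uᵀ * D * U).det) :
    U * (Uᵀ * D * U)⁻¹ * Uᵀ * D * (U * (Uᵀ * D * U)⁻¹ * Uᵀ) = U * (Uᵀ * D * U)⁻¹ * Uᵀ := by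
  calc U * (Uᵀ * D * U)⁻¹ * Uᵀ * D * (U * (Uᵀ * D * U)⁻¹ * Uᵀ)
        = U * ((Uᵀ * D * U)⁻¹ * (Uᵀ * D * U)) * (Uᵀ * D * U)⁻¹ * Uᵀ := by
          simp only [Matrix.mul_assoc]
    _ = U * (Uᵀ * D * U)⁻¹ * Uᵀ := by rw [nonsing_inv_mul _ hM, Matrix.mul_one]

end Matrix

theorem stmt10_general {n q : ℕ}
    (x : Fin n → ℝ) (hx : ∀ i, 0 < x i)
    (U : Matrix (Fin n) (Fin q) ℝ)
    (hU : LinearIndependent ℝ (fun j : Fin q => fun i : Fin n => U i j)) :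
    let A := Matrix.diagonal x * U * (Uᵀ * Matrix.diagonal x * U)⁻¹ * Uᵀ
    ∀ i : Fin n, A i i ∈ Set.Icc (0 : ℝ) 1 := by
  intro A i
  set P := U * (Uᵀ * diagonal x * U)⁻¹ * Uᵀ
  have hM : (Uᵀ * diagonal x * U).PosDef :=
    posDef_transpose_mul_diagonal_mul hx (mulVec_injective_iff.mpr hU)
  have hA : A i i = x i * P i i := by
    simp only [A, P, Matrix.mul_assoc, diagonal_mul]
  rw [hA]
  exact mul_diag_mem_Icc_of_mul_diagonal_mul_self (fun k => (hx k).le)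
    (transpose_mul_inv_mul_transpose U (diagonal_transpose x))
    (mul_inv_mul_transpose_mul_self hM.det_pos.ne'.isUnit) i

theorem stmt10 {n q : ℕ} (hn : 0 < n) (hq : 0 < q)
    (x : Fin n → ℝ) (hx : ∀ i, 0 < x i)
    (U : Matrix (Fin n) (Fin q) ℝ)
    (hU : LinearIndependent ℝ (fun j : Fin q => fun i : Fin n => U i j)) :
    let A := Matrix.diagonal x * U * (Uᵀ * Matrix.diagonal x * U)⁻¹ * Uᵀ
    ∀ i : Fin n, A i i ∈ Set.Icc (0 : ℝ) 1 :=
  stmt10_general x hx U hU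
end

section
/- Let x ∈ ℝⁿ have all entries strictly positive, let S be a real n×r matrix, let U be a real n×q matrix whose columns form a basis of ker(Sᵀ), and let A = diag(x)·U·(Uᵀ·diag(x)·U)⁻¹·Uᵀ. Then for each index i, the i-th column A·e_i of A is the unique vector w ∈ ℝⁿ such that (a) w lies in the subspace diag(x)·ker(Sᵀ) = {diag(x)·u : Sᵀu = 0} and (b) e_i − w lies in the column space Im(S) of S. -/
open Matrix

theorem stmt14 {n q r : ℕ} (hn : 0 < n) (hq : 0 < q) (hr : 0 < r)
    (x : Fin n → ℝ) (hx : ∀ i, 0 < x i)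
    (S : Matrix (Fin n) (Fin r) ℝ)
    (U : Matrix (Fin n) (Fin q) ℝ)
    (hSU : Sᵀ * U = 0)
    (hUli : LinearIndependent ℝ (fun j : Fin q => fun i : Fin n => U i j))
    (hspan : LinearMap.range U.mulVecLin = LinearMap.ker Sᵀ.mulVecLin) :
    let A := Matrix.diagonal x * U * (Uᵀ * Matrix.diagonal x * U)⁻¹ * Uᵀ
    ∀ i : Fin n,
      ((∃ u : Fin n → ℝ, Sᵀ.mulVec u = 0 ∧ (fun k => A k i) = (Matrix.diagonal x).mulVec u)
        ∧ (Pi.single i 1 - fun k => A k i) ∈ LinearMap.range S.mulVecLin)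
      ∧ ∀ w : Fin n → ℝ,
          ((∃ u : Fin n → ℝ, Sᵀ.mulVec u = 0 ∧ w = (Matrix.diagonal x).mulVec u)
            ∧ (Pi.single i 1 - w) ∈ LinearMap.range S.mulVecLin)
          → w = fun k => A k i := by
  intro A i
  set D := Matrix.diagonal x with hD
  set M := Uᵀ * D * U with hM
  -- U has injective mulVec
  have hUinj : Function.Injective U.mulVec := Matrix.mulVec_injective_iff.mpr hUli
  -- M is invertible
  have hMinj : Function.Injective M.mulVec := by
    have hker : ∀ c, M.mulVec c = 0 → c = 0 := by
      intro c hc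
      have h1 : c ⬝ᵥ M.mulVec c = 0 := by rw [hc, dotProduct_zero]
      have h2 : c ⬝ᵥ M.mulVec c = (U.mulVec c) ⬝ᵥ (D.mulVec (U.mulVec c)) := by
        rw [hM, ← Matrix.mulVec_mulVec, ← Matrix.mulVec_mulVec,
          Matrix.dotProduct_mulVec c Uᵀ, Matrix.vecMul_transpose]
      have h3 : ∀ k, (U.mulVec c) k * (D.mulVec (U.mulVec c)) k = x k * (U.mulVec c k)^2 := by
        intro k
        rw [hD, Matrix.mulVec_diagonal]
        ring
      have h4 : ∑ k, x k * (U.mulVec c k)^2 = 0 := by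
        rw [← h1, h2, dotProduct]
        exact Finset.sum_congr rfl fun k _ => (h3 k).symm
      have h5 : U.mulVec c = 0 := by
        funext k
        have hnn : ∀ k ∈ Finset.univ, 0 ≤ x k * (U.mulVec c k)^2 :=
          fun k _ => mul_nonneg (hx k).le (sq_nonneg _)
        have := (Finset.sum_eq_zero_iff_of_nonneg hnn).mp h4 k (Finset.mem_univ k)
        have hsq : (U.mulVec c k)^2 = 0 := by
          rcases mul_eq_zero.mp this with h | h
          · exact absurd h (hx k).ne'
          · exact h
        simpa using pow_eq_zero_iff (n := 2) (by norm_num) |>.mp hsq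
      apply hUinj
      rw [h5, Matrix.mulVec_zero]
    intro a b hab
    have : M.mulVec (a - b) = 0 := by
      rw [Matrix.mulVec_sub, hab, sub_self]
    exact sub_eq_zero.mp (hker _ this)
  have hMu : IsUnit M := Matrix.mulVec_injective_iff_isUnit.mp hMinj
  have hMdet : IsUnit M.det := (Matrix.isUnit_iff_isUnit_det M).mp hMu
  have hMl : M⁻¹ * M = 1 := Matrix.nonsing_inv_mul M hMdet
  have hMr : M * M⁻¹ = 1 := Matrix.mul_nonsing_inv M hMdet
  -- range S = ker Uᵀ
  have hUS : Uᵀ * S = 0 := by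
    have := congrArg Matrix.transpose hSU
    simpa [Matrix.transpose_mul] using this
  have hrankU : U.rank = q := by
    rw [Matrix.rank, Matrix.range_mulVecLin]
    exact (finrank_span_eq_card hUli).trans (Fintype.card_fin q)
  have hrankUT : Uᵀ.rank = q := by rw [Matrix.rank_transpose]; exact hrankU
  have hkerST : Module.finrank ℝ (LinearMap.ker Sᵀ.mulVecLin) = q := by
    rw [← hspan, ← Matrix.rank]
    exact hrankU
  have hrnST := LinearMap.finrank_range_add_finrank_ker Sᵀ.mulVecLin
  have hrnUT := LinearMap.finrank_range_add_finrank_ker Uᵀ.mulVecLin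
  have hfr : Module.finrank ℝ (Fin n → ℝ) = n := by simp
  have hrankS : S.rank = Sᵀ.rank := (Matrix.rank_transpose S).symm
  have hrange : LinearMap.range S.mulVecLin = LinearMap.ker Uᵀ.mulVecLin := by
    apply Submodule.eq_of_le_of_finrank_eq
    · rintro v ⟨y, rfl⟩
      show Uᵀ.mulVec (S.mulVec y) = 0
      rw [Matrix.mulVec_mulVec, hUS, Matrix.zero_mulVec]
    · show Module.finrank ℝ (LinearMap.range S.mulVecLin) = _
      have e1 : Module.finrank ℝ (LinearMap.range S.mulVecLin) = S.rank := rfl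
      have e2 : Module.finrank ℝ (LinearMap.range Sᵀ.mulVecLin) = Sᵀ.rank := rfl
      have e3 : Module.finrank ℝ (LinearMap.range Uᵀ.mulVecLin) = Uᵀ.rank := rfl
      rw [hfr] at hrnST hrnUT
      rw [e2, hkerST] at hrnST
      rw [e3, hrankUT] at hrnUT
      rw [e1, hrankS]
      omega
  -- Column of A as mulVec
  have hcol : (fun k => A k i) = A.mulVec (Pi.single i 1) := by
    rw [Matrix.mulVec_single_one]
    rfl
  have hAassoc : A = D * (U * M⁻¹ * Uᵀ) := by
    show D * U * M⁻¹ * Uᵀ = _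
    rw [Matrix.mul_assoc, Matrix.mul_assoc, Matrix.mul_assoc]
  have hUTA : Uᵀ * A = Uᵀ := by
    show Uᵀ * (D * U * (Uᵀ * D * U)⁻¹ * Uᵀ) = Uᵀ
    rw [← Matrix.mul_assoc, ← Matrix.mul_assoc, ← Matrix.mul_assoc, ← hM, hMr, Matrix.one_mul]
  constructor
  · constructor
    · refine ⟨(U * M⁻¹ * Uᵀ).mulVec (Pi.single i 1), ?_, ?_⟩
      · rw [Matrix.mulVec_mulVec]
        have : Sᵀ * (U * M⁻¹ * Uᵀ) = 0 := by
          rw [← Matrix.mul_assoc, ← Matrix.mul_assoc, hSU, Matrix.zero_mul, Matrix.zero_mul]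
        rw [this, Matrix.zero_mulVec]
      · rw [hcol, Matrix.mulVec_mulVec, ← hAassoc]
    · rw [hrange]
      show Uᵀ.mulVec _ = 0
      rw [Matrix.mulVec_sub, hcol, Matrix.mulVec_mulVec, hUTA, sub_self]
  · rintro w ⟨⟨u, hu1, rfl⟩, hw2⟩
    have hu : u ∈ LinearMap.range U.mulVecLin := by
      rw [hspan]; exact hu1
    obtain ⟨c, hc⟩ := hu
    have hc' : U.mulVec c = u := hc
    rw [hrange] at hw2
    have hw2' : Uᵀ.mulVec (Pi.single i 1 - D.mulVec u) = 0 := hw2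
    have hMc : M.mulVec c = Uᵀ.mulVec (Pi.single i 1) := by
      rw [Matrix.mulVec_sub, sub_eq_zero] at hw2'
      rw [hM, ← Matrix.mulVec_mulVec, ← Matrix.mulVec_mulVec, hc', ← hw2']
    have hcval : c = (M⁻¹ * Uᵀ).mulVec (Pi.single i 1) := by
      rw [← Matrix.mulVec_mulVec, ← hMc, Matrix.mulVec_mulVec, hMl, Matrix.one_mulVec]
    rw [hcol, ← hc', hcval]
    rw [Matrix.mulVec_mulVec, Matrix.mulVec_mulVec]
    have heq : D * U * (M⁻¹ * Uᵀ) = A := by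
      rw [hAassoc, Matrix.mul_assoc, Matrix.mul_assoc]
    rw [heq]
end

section
/- Let x ∈ ℝ⁵ have all entries strictly positive and let U be the 5×2 real matrix with columns u₁ = (−1, 1, 0, 1, 1)ᵀ and u₂ = (1, 0, 1, 0, 1)ᵀ. Let A = diag(x)·U·(Uᵀ·diag(x)·U)⁻¹·Uᵀ. Then the (4,4) entry of A is given by A₄₄ = x₄·(x₁ + x₃ + x₅) / [ (x₁ + x₃ + x₅)·(x₁ + x₂ + x₄ + x₅) − (x₅ − x₁)² ], and the denominator is strictly positive. -/
open Matrix

theorem stmt17 (x : Fin 5 → ℝ) (hx : ∀ i, 0 < x i) :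
    let U : Matrix (Fin 5) (Fin 2) ℝ :=
      Matrix.of ![![-1, 1], ![1, 0], ![0, 1], ![1, 0], ![1, 1]]
    let A := Matrix.diagonal x * U * (Uᵀ * Matrix.diagonal x * U)⁻¹ * Uᵀ
    0 < (x 0 + x 2 + x 4) * (x 0 + x 1 + x 3 + x 4) - (x 4 - x 0) ^ 2
    ∧ A 3 3 = x 3 * (x 0 + x 2 + x 4)
        / ((x 0 + x 2 + x 4) * (x 0 + x 1 + x 3 + x 4) - (x 4 - x 0) ^ 2) := by
  intro U A
  have h0 := hx 0
  have h1 := hx 1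
  have h2 := hx 2
  have h3 := hx 3
  have h4 := hx 4
  have hden : 0 < (x 0 + x 2 + x 4) * (x 0 + x 1 + x 3 + x 4) - (x 4 - x 0) ^ 2 := by
    nlinarith [mul_pos h0 h1, mul_pos h0 h3, mul_pos h2 h4, mul_pos h0 h4,
      mul_pos h0 h2, mul_pos h4 h1, mul_pos h4 h3, mul_pos h2 h0, mul_pos h2 h1,
      mul_pos h2 h3]
  refine ⟨hden, ?_⟩
  have hM : Uᵀ * Matrix.diagonal x * U =
      !![x 0 + x 1 + x 3 + x 4, x 4 - x 0; x 4 - x 0, x 0 + x 2 + x 4] := by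
    ext i j
    fin_cases i <;> fin_cases j <;>
      simp [U, Matrix.mul_apply, Matrix.diagonal, Fin.sum_univ_five, Matrix.vecHead, Matrix.vecTail, Matrix.transpose_apply, Function.comp] <;> ring
  have hdet : (Uᵀ * Matrix.diagonal x * U).det =
      (x 0 + x 2 + x 4) * (x 0 + x 1 + x 3 + x 4) - (x 4 - x 0) ^ 2 := by
    rw [hM, Matrix.det_fin_two_of]; ring
  have hinv : (Uᵀ * Matrix.diagonal x * U)⁻¹ =
      ((x 0 + x 2 + x 4) * (x 0 + x 1 + x 3 + x 4) - (x 4 - x 0) ^ 2)⁻¹ •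
        !![x 0 + x 2 + x 4, -(x 4 - x 0); -(x 4 - x 0), x 0 + x 1 + x 3 + x 4] := by
    rw [Matrix.inv_def, hdet, hM, Matrix.adjugate_fin_two_of, Ring.inverse_eq_inv']
  show (Matrix.diagonal x * U * (Uᵀ * Matrix.diagonal x * U)⁻¹ * Uᵀ) 3 3 = _
  rw [hinv]
  simp [U, Matrix.mul_apply, Matrix.diagonal, Fin.sum_univ_five, Fin.sum_univ_two,
    Matrix.smul_apply, Matrix.vecHead, Matrix.vecTail, Matrix.transpose_apply, Function.comp]
  field_simp
end
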